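/- In the half-integral matching procedure: if in a contracted graph the current proper-half-integral solution z* has t exposed nodes and k vertex-disjoint odd half-cycles, then (a) augmenting along an alternating path between two exposed nodes decreases t by 2 and leaves k unchanged; (b) alternating along a path from an exposed node to an odd half-cycle and converting the cycle into a blossom decreases both t and k by 1; (c) alternating along an even path to a blossom and converting the blossom into a half-cycle decreases t by 1 and increases k by 1. In all cases t+k does not increase, and it strictly decreases in cases (a) and (b). -/

import Mathlib

open Finset

/-- The graph of half-edges of `z`. -/
def HalfGraph {V : Type*} (G : SimpleGraph V) (z : Sym2 V → ℝ) : SimpleGraph V where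
  Adj u v := G.Adj u v ∧ z s(u, v) = 1/2
  symm := ⟨fun u v h => ⟨h.1.symm, by rw [Sym2.eq_swap]; exact h.2⟩⟩
  loopless := ⟨fun u h => G.irrefl h.1⟩

open Classical in
/-- The set of exposed nodes of `z`. -/
noncomputable def exposedSet {V : Type*} [Fintype V] [DecidableEq V]
    (G : SimpleGraph V) [DecidableRel G.Adj] (z : Sym2 V → ℝ) : Finset V :=
  Finset.univ.filter (fun v => ∑ e ∈ G.incidenceFinset v, z e = 0)

/-- The number of (odd) half-cycles of `z`: connected components of the half-edge
graph containing an edge. -/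
noncomputable def cyclesCount {V : Type*} [Fintype V] (G : SimpleGraph V)
    (z : Sym2 V → ℝ) : ℕ :=
  Nat.card {c : (HalfGraph G z).ConnectedComponent //
    ∃ v, v ∈ c.supp ∧ ((HalfGraph G z).neighborSet v).Nonempty}

/-- A proper-half-integral partial matching whose half-part is a disjoint union of
odd cycles: values in `{0,1/2,1}`, supported on edges, fractional degree at most
one, each vertex on at most one 1-edge and on no 1-edge if it meets a half-edge,
half-degrees 0 or 2, and nontrivial half-components odd. -/
def ProperConfig {V : Type*} [Fintype V] [DecidableEq V] (G : SimpleGraph V)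
    [DecidableRel G.Adj] (z : Sym2 V → ℝ) : Prop :=
  (∀ e, z e = 0 ∨ z e = 1/2 ∨ z e = 1) ∧ (∀ e, e ∉ G.edgeSet → z e = 0) ∧
  (∀ v : V, ∑ e ∈ G.incidenceFinset v, z e ≤ 1) ∧
  (∀ v : V, ((HalfGraph G z).neighborSet v).ncard = 0 ∨
    ((HalfGraph G z).neighborSet v).ncard = 2) ∧
  (∀ c : (HalfGraph G z).ConnectedComponent,
    (∃ v ∈ c.supp, ((HalfGraph G z).neighborSet v).Nonempty) → Odd c.supp.ncard)

/-- `P` is an alternating walk for `z`: 0-edges at even positions, 1-edges at odd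
positions. -/
def AltWalk {V : Type*} (G : SimpleGraph V) (z : Sym2 V → ℝ) {u w : V}
    (P : G.Walk u w) : Prop :=
  ∀ (i : ℕ) (h : i < P.edges.length),
    (Even i → z (P.edges[i]'h) = 0) ∧ (Odd i → z (P.edges[i]'h) = 1)

/-!
Flipping `z` to `1 - z` along an alternating path changes `z` by `+1, -1, +1, …` along its edges,
so the fractional degree of an interior vertex is unchanged, that of the first vertex grows by `1`
and that of the last one by `±1` according to the parity of the length. Turning a half-cycle into
a blossom or back changes `z` by `∓1/2, ±1/2, …` around an odd cycle, which moves only the degree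
of its base, by `∓1`, and this cancels the change at the end of the path. Hence in each move
exactly the exposed endpoints of the path stop being exposed.

The half-edge graph is unchanged in (a). In (b) and (c) it loses, resp. gains, exactly the
component formed by the cycle: in (b) a half-cycle is a whole component because half-degrees are
at most `2`; in (c) every vertex of the blossom other than the exposed `u` already carries a
`1`-edge (an odd edge of the blossom, or the last edge of the path at the base), so the degree
bound leaves no room for a half-edge there.
-/

open SimpleGraph

def Alternates {α : Type*} (L : List α) (g : α → ℝ) (a b : ℝ) : Prop :=
  ∀ (i : ℕ) (h : i < L.length), g L[i] = if Even i then a else b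

section Alternates

variable {α : Type*} {L : List α} {g : α → ℝ} {a b : ℝ}

lemma alternates_cons {x : α} : Alternates (x :: L) g a b ↔ g x = a ∧ Alternates L g b a := by
  have hsucc (i : ℕ) : (if Even (i + 1) then a else b) = if Even i then b else a := by
    by_cases hi : Even i <;> simp [Nat.even_add_one, hi]
  simp only [Alternates, List.length_cons]
  constructor
  · intro h
    refine ⟨by simpa using h 0 (by simp), fun i hi => ?_⟩
    rw [← hsucc, ← h (i + 1) (by omega), List.getElem_cons_succ]
  · rintro ⟨h0, h⟩ (_ | i) hi
    · simpa using h0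
    · rw [hsucc, List.getElem_cons_succ, h i (by omega)]

lemma alternates_iff_odd : Alternates L g a b ↔ ∀ (i : ℕ) (h : i < L.length),
    g L[i] = if Odd i then b else a := by
  simp only [Alternates, ← Nat.not_even_iff_odd, ite_not]

lemma Alternates.sub {g' : α → ℝ} {a' b' : ℝ} (h' : Alternates L g' a' b')
    (h : Alternates L g a b) : Alternates L (fun x => g' x - g x) (a' - a) (b' - b) := by
  intro i hi
  simp only [h' i hi, h i hi]
  split_ifs <;> rfl

lemma alternates_const {c : ℝ} (h : ∀ x ∈ L, g x = c) : Alternates L g c c := by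
  intro i hi
  simp [h _ (List.getElem_mem hi)]

lemma Alternates.one_sub {g' : α → ℝ} (h : Alternates L g a b)
    (h' : ∀ x ∈ L, g' x = 1 - g x) : Alternates L g' (1 - a) (1 - b) := by
  intro i hi
  rw [h' _ (List.getElem_mem hi), h i hi]
  split_ifs <;> rfl

lemma Alternates.eq_or_eq_of_mem (h : Alternates L g a b) {x : α} (hx : x ∈ L) :
    g x = a ∨ g x = b := by
  obtain ⟨i, hi, rfl⟩ := List.mem_iff_getElem.1 hx
  rw [h i hi]
  split_ifs <;> simp

end Alternates

section AltWalk

variable {V : Type*} {G : SimpleGraph V} {z : Sym2 V → ℝ} {u w : V} {P : G.Walk u w}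

lemma AltWalk.alternates (h : AltWalk G z P) : Alternates P.edges z 0 1 := by
  intro i hi
  split_ifs with hi'
  · exact (h i hi).1 hi'
  · exact (h i hi).2 (Nat.not_even_iff_odd.1 hi')

lemma AltWalk.ne_half (h : AltWalk G z P) {e : Sym2 V} (he : e ∈ P.edges) : z e ≠ 1 / 2 := by
  rcases h.alternates.eq_or_eq_of_mem he with h | h <;> norm_num [h]

end AltWalk

section IncidentSum

variable {V : Type*} [DecidableEq V] {G : SimpleGraph V} {g : Sym2 V → ℝ}

def incidentSum (L : List (Sym2 V)) (g : Sym2 V → ℝ) (v : V) : ℝ :=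
  (L.map fun e => if v ∈ e then g e else 0).sum

@[simp]
lemma incidentSum_nil (g : Sym2 V → ℝ) (v : V) : incidentSum [] g v = 0 := rfl

@[simp]
lemma incidentSum_cons (e : Sym2 V) (L : List (Sym2 V)) (g : Sym2 V → ℝ) (v : V) :
    incidentSum (e :: L) g v = (if v ∈ e then g e else 0) + incidentSum L g v := by
  simp [incidentSum]

lemma incidentSum_append (L₁ L₂ : List (Sym2 V)) (g : Sym2 V → ℝ) (v : V) :
    incidentSum (L₁ ++ L₂) g v = incidentSum L₁ g v + incidentSum L₂ g v := by
  simp [incidentSum]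

lemma exists_mem_eq_one_of_incidentSum_ne_zero {L : List (Sym2 V)} {v : V}
    (hg : ∀ e ∈ L, g e = 0 ∨ g e = 1) (h : incidentSum L g v ≠ 0) :
    ∃ e ∈ L, v ∈ e ∧ g e = 1 := by
  by_contra! hne
  refine h (List.sum_eq_zero fun x hx => ?_)
  obtain ⟨e, he, rfl⟩ := List.mem_map.1 hx
  split_ifs with hv
  · exact (hg e he).resolve_right (hne e he hv)
  · rfl

/-- Every vertex of the path is counted as an interior one, `a + b`, minus the value that a
virtual edge before the first, resp. after the last, edge would carry. -/
lemma incidentSum_edges_of_isPath {u w : V} {P : G.Walk u w} (hP : P.IsPath) {a b : ℝ}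
    (hg : Alternates P.edges g a b) (v : V) :
    incidentSum P.edges g v = (if v ∈ P.support then a + b else 0) - (if v = u then b else 0)
      - (if v = w then (if Even P.length then a else b) else 0) := by
  induction P generalizing a b with
  | @nil x => by_cases hv : v = x <;> simp [hv]
  | @cons u x w hux T ih =>
    rw [Walk.cons_isPath_iff] at hP
    rw [Walk.edges_cons, alternates_cons] at hg
    have hxT : x ∈ T.support := T.start_mem_support
    have hwT : w ∈ T.support := T.end_mem_support
    have hne : u ≠ x := hux.ne
    rw [Walk.edges_cons, incidentSum_cons, ih hP.1 hg.2, hg.1, Walk.support_cons,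
      Walk.length_cons]
    have huw : u ≠ w := fun h => hP.2 (h ▸ hwT)
    rcases eq_or_ne v u with rfl | hvu
    · simp [hne, huw, hP.2, Sym2.mem_iff]
    rcases eq_or_ne v x with rfl | hvx
    · rcases eq_or_ne v w with rfl | hvw
      · by_cases he : Even T.length <;> simp [hvu, he, Nat.even_add_one, Sym2.mem_iff]
      · simp [hvu, hvw, hxT, Sym2.mem_iff]
    · by_cases he : Even T.length <;>
        simp [hvu, hvx, he, Nat.even_add_one, Sym2.mem_iff, add_comm b a]

lemma incidentSum_edges_of_isCycle {w : V} {C : G.Walk w w} (hC : C.IsCycle) {a b : ℝ}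
    (hg : Alternates C.edges g a b) (v : V) :
    incidentSum C.edges g v =
      (if v ∈ C.support then a + b else 0) + (if v = w ∧ Odd C.length then a - b else 0) := by
  cases C with
  | nil => exact absurd rfl hC.ne_nil
  | @cons _ x _ hwx T =>
    have hT : T.IsPath := ((Walk.cons_isCycle_iff T hwx).1 hC).1
    rw [Walk.edges_cons, alternates_cons] at hg
    have hwT : w ∈ T.support := T.end_mem_support
    have hne : w ≠ x := hwx.ne
    rw [Walk.edges_cons, incidentSum_cons, incidentSum_edges_of_isPath hT hg.2, hg.1,
      Walk.support_cons, Walk.length_cons]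
    rcases eq_or_ne v w with rfl | hvw
    · by_cases he : Even T.length <;> simp [hne, he, hwT, Nat.odd_add_one, Sym2.mem_iff]
    · rcases eq_or_ne v x with rfl | hvx
      · simp [hvw, T.start_mem_support, Sym2.mem_iff]
      · simp [hvw, hvx, Sym2.mem_iff, add_comm b a]

lemma incidentSum_edges_flip {z z' : Sym2 V → ℝ} {u w : V} {P : G.Walk u w} (hP : P.IsPath)
    (halt : AltWalk G z P) (hz' : ∀ e ∈ P.edges, z' e = 1 - z e) (v : V) :
    incidentSum P.edges (fun e => z' e - z e) v =
      (if v = u then 1 else 0) + (if v = w then (if Even P.length then -1 else 1) else 0) := by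
  have halt' := (halt.alternates.one_sub hz').sub halt.alternates
  rw [incidentSum_edges_of_isPath hP halt' v]
  split_ifs <;> norm_num

end IncidentSum

section Degrees

variable {V : Type*} [Fintype V] [DecidableEq V] {G : SimpleGraph V} [DecidableRel G.Adj]
  {z z' : Sym2 V → ℝ}

lemma sum_incidenceFinset_eq_incidentSum {L : List (Sym2 V)} (hL : L.Nodup)
    (hLG : ∀ e ∈ L, e ∈ G.edgeSet) {g : Sym2 V → ℝ} (hg : ∀ e ∉ L, g e = 0) (v : V) :
    ∑ e ∈ G.incidenceFinset v, g e = incidentSum L g v := by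
  rw [incidentSum, ← List.sum_toFinset _ hL, ← Finset.sum_filter]
  refine (Finset.sum_subset (fun e he => ?_) fun e he heL => hg e fun h => heL ?_).symm
  · rw [Finset.mem_filter, List.mem_toFinset] at he
    exact (mem_incidenceFinset G v e).2 ⟨hLG e he.1, he.2⟩
  · exact Finset.mem_filter.2 ⟨List.mem_toFinset.2 h, ((mem_incidenceFinset G v e).1 he).2⟩

lemma sum_incidenceFinset_eq_add_incidentSum {L : List (Sym2 V)} (hL : L.Nodup)
    (hLG : ∀ e ∈ L, e ∈ G.edgeSet) (h : ∀ e ∉ L, z' e = z e) (v : V) :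
    ∑ e ∈ G.incidenceFinset v, z' e =
      ∑ e ∈ G.incidenceFinset v, z e + incidentSum L (fun e => z' e - z e) v := by
  rw [← sum_incidenceFinset_eq_incidentSum hL hLG (fun e he => sub_eq_zero.2 (h e he)),
    Finset.sum_sub_distrib, add_sub_cancel]

lemma mem_exposedSet_iff {v : V} :
    v ∈ exposedSet G z ↔ ∑ e ∈ G.incidenceFinset v, z e = 0 := by
  simp [exposedSet]

lemma card_exposedSet_add_card {D : Finset V} (hD : D ⊆ exposedSet G z)
    (h : ∀ v, ∑ e ∈ G.incidenceFinset v, z' e =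
      ∑ e ∈ G.incidenceFinset v, z e + if v ∈ D then 1 else 0) :
    (exposedSet G z').card + D.card = (exposedSet G z).card := by
  suffices exposedSet G z' = exposedSet G z \ D by
    rw [this, Finset.card_sdiff_add_card_eq_card hD]
  ext v
  rw [Finset.mem_sdiff, mem_exposedSet_iff, mem_exposedSet_iff, h v]
  by_cases hv : v ∈ D
  · simp [hv, mem_exposedSet_iff.1 (hD hv)]
  · simp [hv]

lemma not_halfGraph_adj_of_mem_exposedSet (hnn : ∀ e, 0 ≤ z e) {a b : V}
    (ha : a ∈ exposedSet G z) : ¬ (HalfGraph G z).Adj a b := by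
  rintro ⟨hab, hhalf⟩
  have := Finset.single_le_sum (fun e _ => hnn e)
    ((mem_incidenceFinset G a s(a, b)).2 ⟨hab, Sym2.mem_mk_left a b⟩)
  rw [mem_exposedSet_iff.1 ha, hhalf] at this
  norm_num at this

lemma not_halfGraph_adj_of_mem_of_eq_one (hnn : ∀ e, 0 ≤ z e) {a b : V}
    (hdeg : ∑ e ∈ G.incidenceFinset a, z e ≤ 1) {e : Sym2 V} (he : e ∈ G.edgeSet) (hae : a ∈ e)
    (h1 : z e = 1) : ¬ (HalfGraph G z).Adj a b := by
  rintro ⟨hab, hhalf⟩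
  have hne : e ≠ s(a, b) := fun h => by norm_num [h, hhalf] at h1
  have hsub : {e, s(a, b)} ⊆ G.incidenceFinset a := by
    intro f hf
    rcases Finset.mem_insert.1 hf with rfl | hf
    · exact (mem_incidenceFinset G a f).2 ⟨he, hae⟩
    · rw [Finset.mem_singleton.1 hf]
      exact (mem_incidenceFinset G a _).2 ⟨hab, Sym2.mem_mk_left a b⟩
  have := Finset.sum_le_sum_of_subset_of_nonneg hsub fun f _ _ => hnn f
  rw [Finset.sum_pair hne, h1, hhalf] at this
  linarith

end Degrees

namespace SimpleGraph

variable {V : Type*}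

def nontrivialComponents (H : SimpleGraph V) : Set H.ConnectedComponent :=
  {c | ∃ v ∈ c.supp, (H.neighborSet v).Nonempty}

lemma reachable_of_adj_iff_and_notMem_supp {H H' : SimpleGraph V} {c₀ : H.ConnectedComponent}
    (hH' : ∀ a b, H'.Adj a b ↔ H.Adj a b ∧ a ∉ c₀.supp) {a b : V} (hab : H.Reachable a b)
    (ha : a ∉ c₀.supp) : H'.Reachable a b := by
  obtain ⟨p⟩ := hab
  induction p with
  | nil => rfl
  | @cons a x b hax p ih =>
    have hx : x ∉ c₀.supp := by
      rwa [ConnectedComponent.mem_supp_iff, ← ConnectedComponent.sound hax.reachable,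
        ← ConnectedComponent.mem_supp_iff]
    exact ((hH' a x).2 ⟨hax, ha⟩).reachable.trans (ih hx)

theorem ncard_nontrivialComponents_add_one [Finite V] {H H' : SimpleGraph V}
    {c₀ : H.ConnectedComponent} (hc₀ : c₀ ∈ H.nontrivialComponents)
    (hH' : ∀ a b, H'.Adj a b ↔ H.Adj a b ∧ a ∉ c₀.supp) :
    H'.nontrivialComponents.ncard + 1 = H.nontrivialComponents.ncard := by
  have hle : H' ≤ H := fun a b h => ((hH' a b).1 h).1
  set F := ConnectedComponent.map (Hom.ofLE hle)
  have hF (v : V) : F (H'.connectedComponentMk v) = H.connectedComponentMk v := rfl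
  have hout {v x : V} (hvx : H'.Adj v x) : v ∉ c₀.supp := ((hH' v x).1 hvx).2
  have hinj : Set.InjOn F H'.nontrivialComponents := by
    rintro _ ⟨v₁, rfl, x₁, hx₁⟩ _ ⟨v₂, rfl, -⟩ h
    rw [hF, hF] at h
    exact ConnectedComponent.sound
      (reachable_of_adj_iff_and_notMem_supp hH' (ConnectedComponent.exact h) (hout hx₁))
  have himage : F '' H'.nontrivialComponents = H.nontrivialComponents \ {c₀} := by
    ext c
    constructor
    · rintro ⟨_, ⟨v, rfl, x, hx⟩, rfl⟩
      refine ⟨⟨v, rfl, x, hle hx⟩, fun h => hout hx ?_⟩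
      rw [ConnectedComponent.mem_supp_iff, ← Set.mem_singleton_iff.1 h, hF]
    · rintro ⟨⟨v, rfl, x, hx⟩, hne⟩
      have hv : v ∉ c₀.supp := fun h => hne ((ConnectedComponent.mem_supp_iff _ _).1 h)
      exact ⟨H'.connectedComponentMk v, ⟨v, rfl, x, (hH' v x).2 ⟨hx, hv⟩⟩, hF v⟩
  rw [← Set.ncard_sdiff_singleton_add_one hc₀, ← himage, hinj.ncard_image]

lemma supp_connectedComponentMk_eq_support [DecidableEq V] {G H : SimpleGraph V} {w : V}
    {C : G.Walk w w} (hCH : ∀ e ∈ C.edges, e ∈ H.edgeSet)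
    (hclosed : ∀ a ∈ C.support, ∀ b, H.Adj a b → s(a, b) ∈ C.edges) :
    (H.connectedComponentMk w).supp = {v | v ∈ C.support} := by
  ext v
  rw [ConnectedComponent.mem_supp_iff, eq_comm, Set.mem_ofPred_eq]
  constructor
  · intro h
    obtain ⟨p⟩ := ConnectedComponent.exact h
    suffices ∀ {a b : V} (p : H.Walk a b), a ∈ C.support → b ∈ C.support from
      this p C.start_mem_support
    intro a b p
    induction p with
    | nil => exact id
    | cons hax p ih => exact fun ha => ih (C.snd_mem_support_of_mem_edges (hclosed _ ha _ hax))
  · intro hv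
    let C' := C.transfer H hCH
    exact ConnectedComponent.sound ⟨C'.takeUntil v (by rwa [Walk.support_transfer])⟩

lemma ncard_nontrivialComponents_add_one_of_isCycle [Finite V] [DecidableEq V]
    {G H₀ H₁ : SimpleGraph V} {w : V} {C : G.Walk w w} (hC : C.IsCycle)
    (hCH : ∀ e ∈ C.edges, e ∈ H₁.edgeSet)
    (hH : ∀ a b, H₀.Adj a b ↔ H₁.Adj a b ∧ s(a, b) ∉ C.edges)
    (hiso : ∀ a ∈ C.support, ∀ b, ¬ H₀.Adj a b) :
    H₀.nontrivialComponents.ncard + 1 = H₁.nontrivialComponents.ncard := by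
  have hclosed : ∀ a ∈ C.support, ∀ b, H₁.Adj a b → s(a, b) ∈ C.edges := fun a ha b hab => by
    by_contra h
    exact hiso a ha b ((hH a b).2 ⟨hab, h⟩)
  have hsupp := supp_connectedComponentMk_eq_support hCH hclosed
  refine ncard_nontrivialComponents_add_one (c₀ := H₁.connectedComponentMk w) ?_ fun a b => ?_
  · cases C with
    | nil => exact absurd rfl hC.ne_nil
    | @cons _ x _ hwx T => exact ⟨w, rfl, x, hCH s(w, x) (by simp)⟩
  · rw [hsupp, hH, Set.mem_ofPred_eq]
    exact and_congr_right fun hab =>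
      not_congr ⟨fun h => C.fst_mem_support_of_mem_edges h, fun ha => hclosed a ha b hab⟩

lemma Walk.edges_disjoint_of_support {G : SimpleGraph V} {u w u' w' x : V} (P : G.Walk u w)
    (Q : G.Walk u' w') (h : ∀ v ∈ P.support, v ∈ Q.support → v = x) : P.edges.Disjoint Q.edges := by
  intro e heP heQ
  induction e using Sym2.ind with
  | _ a b =>
    have ha := h a (P.fst_mem_support_of_mem_edges heP) (Q.fst_mem_support_of_mem_edges heQ)
    have hb := h b (P.snd_mem_support_of_mem_edges heP) (Q.snd_mem_support_of_mem_edges heQ)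
    exact (P.adj_of_mem_edges heP).ne (ha.trans hb.symm)

lemma Walk.IsCycle.mem_edges_of_adj [Finite V] {G H : SimpleGraph V} {w : V} {C : G.Walk w w}
    (hC : C.IsCycle) (hCH : ∀ e ∈ C.edges, e ∈ H.edgeSet) {a b : V} (ha : a ∈ C.support)
    (hdeg : (H.neighborSet a).ncard ≤ 2) (hab : H.Adj a b) : s(a, b) ∈ C.edges := by
  have hsub : C.toSubgraph.neighborSet a ⊆ H.neighborSet a := fun x hx =>
    hCH _ (Walk.adj_toSubgraph_iff_mem_edges.1 hx)
  have heq := Set.eq_of_subset_of_ncard_le hsub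
    (by rwa [hC.ncard_neighborSet_toSubgraph_eq_two ha])
  exact Walk.adj_toSubgraph_iff_mem_edges.1 (heq ▸ hab : b ∈ C.toSubgraph.neighborSet a)

end SimpleGraph

section HalfGraph

variable {V : Type*} {G : SimpleGraph V} {z z' : Sym2 V → ℝ}

lemma mem_edgeSet_halfGraph {e : Sym2 V} (he : e ∈ G.edgeSet) (h : z e = 1 / 2) :
    e ∈ (HalfGraph G z).edgeSet := by
  induction e using Sym2.ind with
  | _ a b => exact ⟨he, h⟩

lemma halfGraph_eq_of_forall_iff (h : ∀ e, z' e = 1 / 2 ↔ z e = 1 / 2) :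
    HalfGraph G z' = HalfGraph G z := by
  ext a b
  exact and_congr_right fun _ => h s(a, b)

lemma halfGraph_adj_iff_of_forall_notMem {L : List (Sym2 V)}
    (hout : ∀ e ∉ L, z e = 1 / 2 ↔ z' e = 1 / 2) (hL : ∀ e ∈ L, z e ≠ 1 / 2) (a b : V) :
    (HalfGraph G z).Adj a b ↔ (HalfGraph G z').Adj a b ∧ s(a, b) ∉ L := by
  show G.Adj a b ∧ z s(a, b) = 1 / 2 ↔ (G.Adj a b ∧ z' s(a, b) = 1 / 2) ∧ s(a, b) ∉ L
  by_cases he : s(a, b) ∈ L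
  · exact iff_of_false (fun h => hL _ he h.2) fun h => h.2 he
  · rw [hout _ he, and_iff_left he]

lemma half_iff_of_flip {u w : V} {P : G.Walk u w} (halt : AltWalk G z P)
    (hz'P : ∀ e ∈ P.edges, z' e = 1 - z e) {L : List (Sym2 V)}
    (hz'out : ∀ e, e ∉ P.edges → e ∉ L → z' e = z e) {e : Sym2 V} (he : e ∉ L) :
    z' e = 1 / 2 ↔ z e = 1 / 2 := by
  by_cases heP : e ∈ P.edges
  · have := halt.ne_half heP
    rw [hz'P e heP]
    exact ⟨fun h => absurd (by linarith) this, fun h => absurd h this⟩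
  · rw [hz'out e heP he]

lemma cyclesCount_eq_ncard [Fintype V] :
    cyclesCount G z = (HalfGraph G z).nontrivialComponents.ncard :=
  Nat.card_coe_set_eq _

lemma cyclesCount_add_one_of_isCycle [Fintype V] [DecidableEq V] {z₀ z₁ : Sym2 V → ℝ} {w : V}
    {C : G.Walk w w} (hC : C.IsCycle) (hC₀ : ∀ e ∈ C.edges, z₀ e ≠ 1 / 2)
    (hC₁ : ∀ e ∈ C.edges, z₁ e = 1 / 2) (hout : ∀ e ∉ C.edges, z₀ e = 1 / 2 ↔ z₁ e = 1 / 2)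
    (hiso : ∀ a ∈ C.support, ∀ b, ¬ (HalfGraph G z₀).Adj a b) :
    cyclesCount G z₀ + 1 = cyclesCount G z₁ := by
  rw [cyclesCount_eq_ncard, cyclesCount_eq_ncard]
  refine ncard_nontrivialComponents_add_one_of_isCycle hC (fun e he => ?_)
    (halfGraph_adj_iff_of_forall_notMem hout hC₀) hiso
  exact mem_edgeSet_halfGraph (C.edges_subset_edgeSet he) (hC₁ e he)

theorem cyclesCount_augment [Fintype V] [DecidableEq V] {u w : V} {P : G.Walk u w}
    (halt : AltWalk G z P) (hz' : ∀ e, z' e = if e ∈ P.edges then 1 - z e else z e) :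
    cyclesCount G z' = cyclesCount G z := by
  rw [cyclesCount_eq_ncard, cyclesCount_eq_ncard, halfGraph_eq_of_forall_iff fun e =>
    half_iff_of_flip (L := []) halt (fun e he => by rw [hz', if_pos he])
      (fun e he _ => by rw [hz', if_neg he]) List.not_mem_nil]

end HalfGraph

section Moves

variable {V : Type*} [Fintype V] [DecidableEq V] {G : SimpleGraph V} [DecidableRel G.Adj]
  {z z' : Sym2 V → ℝ} {u w : V} {P : G.Walk u w}

theorem card_exposedSet_augment (huw : u ≠ w) (hu : u ∈ exposedSet G z)
    (hw : w ∈ exposedSet G z) (hP : P.IsPath) (hodd : Odd P.length) (halt : AltWalk G z P)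
    (hz' : ∀ e, z' e = if e ∈ P.edges then 1 - z e else z e) :
    (exposedSet G z').card + 2 = (exposedSet G z).card := by
  rw [← Finset.card_pair huw]
  refine card_exposedSet_add_card (Finset.insert_subset hu (Finset.singleton_subset_iff.2 hw))
    fun v => ?_
  rw [sum_incidenceFinset_eq_add_incidentSum (z := z) hP.edges_nodup
      (fun _ he => P.edges_subset_edgeSet he) (fun e he => by rw [hz', if_neg he]),
    incidentSum_edges_flip hP halt (fun e he => by rw [hz', if_pos he]),
    if_neg (Nat.not_even_iff_odd.2 hodd)]
  simp only [Finset.mem_insert, Finset.mem_singleton]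
  rcases eq_or_ne v u with rfl | hvu
  · simp [huw]
  · simp [hvu]

variable {C : G.Walk w w}

theorem card_exposedSet_flip_path_cycle (hu : u ∈ exposedSet G z) (hP : P.IsPath)
    (halt : AltWalk G z P) (hz'P : ∀ e ∈ P.edges, z' e = 1 - z e) (hC : C.IsCycle)
    (hPC : ∀ v ∈ P.support, v ∈ C.support → v = w)
    (hz'out : ∀ e, e ∉ P.edges → e ∉ C.edges → z' e = z e)
    (hCsum : ∀ v, incidentSum C.edges (fun e => z' e - z e) v =
      if v = w then (if Even P.length then 1 else -1) else 0) :
    (exposedSet G z').card + 1 = (exposedSet G z).card := by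
  have hL : (P.edges ++ C.edges).Nodup :=
    hP.edges_nodup.append hC.edges_nodup (P.edges_disjoint_of_support C hPC)
  have hLG : ∀ e ∈ P.edges ++ C.edges, e ∈ G.edgeSet := fun e he =>
    (List.mem_append.1 he).elim (fun h => P.edges_subset_edgeSet h)
      fun h => C.edges_subset_edgeSet h
  rw [← Finset.card_singleton u]
  refine card_exposedSet_add_card (Finset.singleton_subset_iff.2 hu) fun v => ?_
  rw [sum_incidenceFinset_eq_add_incidentSum (z := z) hL hLG
      (fun e he => by rw [List.mem_append, not_or] at he; exact hz'out e he.1 he.2),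
    incidentSum_append, incidentSum_edges_flip hP halt hz'P, hCsum]
  simp only [Finset.mem_singleton]
  split_ifs <;> norm_num

theorem card_exposedSet_halfCycle_to_blossom (hu : u ∈ exposedSet G z) (hP : P.IsPath)
    (hodd : Odd P.length) (halt : AltWalk G z P) (hC : C.IsCycle) (hCodd : Odd C.length)
    (hChalf : ∀ e ∈ C.edges, z e = 1 / 2) (hPC : ∀ v ∈ P.support, v ∈ C.support → v = w)
    (hz'C : ∀ (i : ℕ) (h : i < C.edges.length), z' C.edges[i] = if Odd i then 1 else 0)
    (hz'P : ∀ e ∈ P.edges, z' e = 1 - z e)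
    (hz'out : ∀ e, e ∉ P.edges → e ∉ C.edges → z' e = z e) :
    (exposedSet G z').card + 1 = (exposedSet G z).card := by
  refine card_exposedSet_flip_path_cycle hu hP halt hz'P hC hPC hz'out fun v => ?_
  rw [incidentSum_edges_of_isCycle hC
      ((alternates_iff_odd.2 hz'C).sub (alternates_const hChalf)),
    if_neg (Nat.not_even_iff_odd.2 hodd)]
  simp only [hCodd, and_true]
  split_ifs <;> norm_num

theorem cyclesCount_halfCycle_to_blossom (hz : ProperConfig G z) (halt : AltWalk G z P)
    (hC : C.IsCycle) (hChalf : ∀ e ∈ C.edges, z e = 1 / 2)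
    (hz'C : ∀ (i : ℕ) (h : i < C.edges.length), z' C.edges[i] = if Odd i then 1 else 0)
    (hz'P : ∀ e ∈ P.edges, z' e = 1 - z e)
    (hz'out : ∀ e, e ∉ P.edges → e ∉ C.edges → z' e = z e) :
    cyclesCount G z' + 1 = cyclesCount G z := by
  have hC' : ∀ e ∈ C.edges, z' e ≠ 1 / 2 := fun e he => by
    rcases (alternates_iff_odd.2 hz'C).eq_or_eq_of_mem he with h | h <;> norm_num [h]
  have hout : ∀ e ∉ C.edges, z' e = 1 / 2 ↔ z e = 1 / 2 := fun e he =>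
    half_iff_of_flip halt hz'P hz'out he
  refine cyclesCount_add_one_of_isCycle hC hC' hChalf hout fun a ha b hab => ?_
  obtain ⟨hab, habC⟩ := (halfGraph_adj_iff_of_forall_notMem hout hC' a b).1 hab
  obtain ⟨-, -, -, hhalfdeg, -⟩ := hz
  refine habC (hC.mem_edges_of_adj (fun e he => ?_) ha ?_ hab)
  · exact mem_edgeSet_halfGraph (C.edges_subset_edgeSet he) (hChalf e he)
  · rcases hhalfdeg a with h | h <;> omega

theorem card_exposedSet_blossom_to_halfCycle (hu : u ∈ exposedSet G z) (hP : P.IsPath)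
    (heven : Even P.length) (halt : AltWalk G z P) (hC : C.IsCycle) (hCodd : Odd C.length)
    (hzC : ∀ (i : ℕ) (h : i < C.edges.length), z C.edges[i] = if Odd i then 1 else 0)
    (hPC : ∀ v ∈ P.support, v ∈ C.support → v = w) (hz'C : ∀ e ∈ C.edges, z' e = 1 / 2)
    (hz'P : ∀ e ∈ P.edges, z' e = 1 - z e)
    (hz'out : ∀ e, e ∉ P.edges → e ∉ C.edges → z' e = z e) :
    (exposedSet G z').card + 1 = (exposedSet G z).card := by
  refine card_exposedSet_flip_path_cycle hu hP halt hz'P hC hPC hz'out fun v => ?_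
  rw [incidentSum_edges_of_isCycle hC ((alternates_const hz'C).sub (alternates_iff_odd.2 hzC)),
    if_pos heven]
  simp only [hCodd, and_true]
  split_ifs <;> norm_num

theorem cyclesCount_blossom_to_halfCycle (hz : ProperConfig G z) (hu : u ∈ exposedSet G z)
    (hP : P.IsPath) (heven : Even P.length) (halt : AltWalk G z P) (hC : C.IsCycle)
    (hCodd : Odd C.length)
    (hzC : ∀ (i : ℕ) (h : i < C.edges.length), z C.edges[i] = if Odd i then 1 else 0)
    (hPC : ∀ v ∈ P.support, v ∈ C.support → v = w) (hz'C : ∀ e ∈ C.edges, z' e = 1 / 2)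
    (hz'P : ∀ e ∈ P.edges, z' e = 1 - z e)
    (hz'out : ∀ e, e ∉ P.edges → e ∉ C.edges → z' e = z e) :
    cyclesCount G z + 1 = cyclesCount G z' := by
  obtain ⟨hval, -, hdeg, -, -⟩ := hz
  have hnn : ∀ e, 0 ≤ z e := fun e => by rcases hval e with h | h | h <;> norm_num [h]
  have hzC := alternates_iff_odd.2 hzC
  have hval : ∀ e ∈ P.edges ++ C.edges, z e = 0 ∨ z e = 1 := fun e he =>
    (List.mem_append.1 he).elim halt.alternates.eq_or_eq_of_mem hzC.eq_or_eq_of_mem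
  refine cyclesCount_add_one_of_isCycle hC
    (fun e he => by rcases hzC.eq_or_eq_of_mem he with h | h <;> norm_num [h]) hz'C
    (fun e he => (half_iff_of_flip halt hz'P hz'out he).symm) fun a ha b => ?_
  rcases eq_or_ne a u with rfl | hau
  · exact not_halfGraph_adj_of_mem_exposedSet hnn hu
  have hsum : incidentSum (P.edges ++ C.edges) z a = 1 := by
    rw [incidentSum_append, incidentSum_edges_of_isPath hP halt.alternates,
      incidentSum_edges_of_isCycle hC hzC]
    rcases eq_or_ne a w with rfl | haw
    · simp [hau, heven, hCodd, P.end_mem_support, ha]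
    · have haP : a ∉ P.support := fun h => haw (hPC a h ha)
      simp [hau, haw, haP, ha]
  obtain ⟨e, he, hae, he1⟩ := exists_mem_eq_one_of_incidentSum_ne_zero hval (hsum ▸ one_ne_zero)
  refine not_halfGraph_adj_of_mem_of_eq_one hnn (hdeg a) ?_ hae he1
  exact (List.mem_append.1 he).elim (fun h => P.edges_subset_edgeSet h)
    fun h => C.edges_subset_edgeSet h

end Moves

/-- accounting of the three primal moves of the half-integral
matching procedure.  Writing `t` for the number of exposed nodes and `k` for the
number of odd half-cycles of the current proper-half-integral solution `z`:
(a) augmenting along an odd alternating path between two exposed nodes decreases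
`t` by `2` and leaves `k` unchanged; (b) alternating along an odd alternating path
from an exposed node to an odd half-cycle and converting the cycle into a blossom
decreases both `t` and `k` by `1`; (c) alternating along an even alternating path
from an exposed node to the base of a blossom and converting the blossom into a
half-cycle decreases `t` by `1` and increases `k` by `1`.  In all three cases
`t + k` does not increase, and it strictly decreases in cases (a) and (b). -/
theorem half_integral_moves_accounting
    {V : Type*} [Fintype V] [DecidableEq V] (G : SimpleGraph V) [DecidableRel G.Adj]
    (z : Sym2 V → ℝ) (hz : ProperConfig G z) :
    -- case (a)
    ((∀ (u w : V) (P : G.Walk u w) (z' : Sym2 V → ℝ),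
      u ≠ w → u ∈ exposedSet G z → w ∈ exposedSet G z →
      P.IsPath → Odd P.length → AltWalk G z P →
      (∀ e, z' e = if e ∈ P.edges then 1 - z e else z e) →
      (exposedSet G z').card = (exposedSet G z).card - 2 ∧
      cyclesCount G z' = cyclesCount G z ∧
      (exposedSet G z').card + cyclesCount G z' <
        (exposedSet G z).card + cyclesCount G z) ∧
    -- case (b)
    (∀ (u w : V) (P : G.Walk u w) (C : G.Walk w w) (z' : Sym2 V → ℝ),
      u ∈ exposedSet G z → P.IsPath → Odd P.length → AltWalk G z P →
      C.IsCycle → Odd C.length → (∀ e ∈ C.edges, z e = 1/2) →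
      (∀ v ∈ P.support, v ∈ C.support → v = w) →
      (∀ (i : ℕ) (h : i < C.edges.length),
        z' (C.edges[i]'h) = if Odd i then 1 else 0) →
      (∀ e ∈ P.edges, z' e = 1 - z e) →
      (∀ e, e ∉ P.edges → e ∉ C.edges → z' e = z e) →
      (exposedSet G z').card = (exposedSet G z).card - 1 ∧
      cyclesCount G z' = cyclesCount G z - 1 ∧
      (exposedSet G z').card + cyclesCount G z' <
        (exposedSet G z).card + cyclesCount G z) ∧
    -- case (c)
    (∀ (u w : V) (P : G.Walk u w) (C : G.Walk w w) (z' : Sym2 V → ℝ),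
      u ∈ exposedSet G z → P.IsPath → Even P.length → AltWalk G z P →
      C.IsCycle → Odd C.length →
      (∀ (i : ℕ) (h : i < C.edges.length),
        z (C.edges[i]'h) = if Odd i then 1 else 0) →
      (∀ v ∈ P.support, v ∈ C.support → v = w) →
      (∀ e ∈ C.edges, z' e = 1/2) →
      (∀ e ∈ P.edges, z' e = 1 - z e) →
      (∀ e, e ∉ P.edges → e ∉ C.edges → z' e = z e) →
      (exposedSet G z').card = (exposedSet G z).card - 1 ∧
      cyclesCount G z' = cyclesCount G z + 1 ∧
      (exposedSet G z').card + cyclesCount G z' ≤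
        (exposedSet G z).card + cyclesCount G z)) := by
  refine ⟨fun u w P z' huw hu hw hP hodd halt hz' => ?_,
    fun u w P C z' hu hP hodd halt hC hCodd hChalf hPC hz'C hz'P hz'out => ?_,
    fun u w P C z' hu hP heven halt hC hCodd hzC hPC hz'C hz'P hz'out => ?_⟩
  · have ht := card_exposedSet_augment huw hu hw hP hodd halt hz'
    have hk := cyclesCount_augment halt hz'
    omega
  · have ht := card_exposedSet_halfCycle_to_blossom hu hP hodd halt hC hCodd hChalf hPC hz'C
      hz'P hz'out
    have hk := cyclesCount_halfCycle_to_blossom hz halt hC hChalf hz'C hz'P hz'out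
    omega
  · have ht := card_exposedSet_blossom_to_halfCycle hu hP heven halt hC hCodd hzC hPC hz'C
      hz'P hz'out
    have hk := cyclesCount_blossom_to_halfCycle hz hu hP heven halt hC hCodd hzC hPC hz'C
      hz'P hz'out
    omega
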